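/- arXiv:2503.02052 — 4 statements merged into one kernel-verified Lean document; each statement's English description precedes it below -/
import Mathlib

section
/- Let T be a triangulated category with a bounded t-structure with heart A, and let A' ⊆ A be a Serre subcategory. Then the thick closure of A' in T (the smallest thick full triangulated subcategory containing A') equals the full subcategory {E ∈ T | H^i(E) ∈ A' for all i ∈ ℤ}. -/
open CategoryTheory CategoryTheory.Limits CategoryTheory.Pretriangulated

universe v u v' u'

section TriangulatedDefs

variable (T : Type u) [Category.{v} T] [HasZeroObject T] [Preadditive T] [HasShift T ℤ]
  [∀ n : ℤ, (shiftFunctor T n).Additive] [Pretriangulated T]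

/-- A (strictly full) triangulated subcategory, as a predicate on objects. -/
structure IsTriangulatedSub (P : Set T) : Prop where
  zero : ∀ X : T, IsZero X → X ∈ P
  iso : ∀ {X Y : T}, (X ≅ Y) → X ∈ P → Y ∈ P
  shift : ∀ (X : T) (n : ℤ), X ∈ P → (X⟦n⟧ : T) ∈ P
  ext₂ : ∀ Tr : Triangle T, Tr ∈ (distTriang T) → Tr.obj₁ ∈ P → Tr.obj₃ ∈ P → Tr.obj₂ ∈ P

/-- A thick triangulated subcategory: also closed under direct summands (retracts). -/
structure IsThickSub (P : Set T) extends IsTriangulatedSub T P : Prop where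
  summand : ∀ {X Y : T} (i : X ⟶ Y) (r : Y ⟶ X), i ≫ r = 𝟙 X → Y ∈ P → X ∈ P

/-- The thick closure of a set of objects: the smallest thick full triangulated
subcategory containing it. -/
def thickClosure (S : Set T) : Set T :=
  {X | ∀ P : Set T, IsThickSub T P → S ⊆ P → X ∈ P}

/-- The smallest full triangulated subcategory containing a set of objects. -/
def triangClosure (S : Set T) : Set T :=
  {X | ∀ P : Set T, IsTriangulatedSub T P → S ⊆ P → X ∈ P}

/-- A classical generator: an object whose thick closure is the whole category. -/
def IsClassicalGenerator (G : T) : Prop := ∀ X : T, X ∈ thickClosure T {G}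

end TriangulatedDefs

section SerreDefs

variable (A : Type u') [Category.{v'} A] [Abelian A]

/-- A Serre subcategory of an abelian category, as a predicate on objects:
closed under subobjects, quotient objects and extensions. -/
structure IsSerreSub (P : Set A) : Prop where
  zero : ∀ X : A, IsZero X → X ∈ P
  subobj : ∀ {X Y : A} (f : X ⟶ Y), Mono f → Y ∈ P → X ∈ P
  quot : ∀ {X Y : A} (f : X ⟶ Y), Epi f → X ∈ P → Y ∈ P
  extension : ∀ S : ShortComplex A, S.ShortExact → S.X₁ ∈ P → S.X₃ ∈ P → S.X₂ ∈ P

/-- The Serre subcategory generated by a set of objects. -/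
def serreClosure (S : Set A) : Set A :=
  {X | ∀ P : Set A, IsSerreSub A P → S ⊆ P → X ∈ P}

/-- A generator of an abelian category: an object not contained in any proper
Serre subcategory. -/
def IsAbGenerator (G : A) : Prop :=
  ∀ P : Set A, IsSerreSub A P → P ≠ Set.univ → G ∉ P

end SerreDefs

section THeart

variable (T : Type u) [Category.{v} T] [HasZeroObject T] [Preadditive T] [HasShift T ℤ]
  [∀ n : ℤ, (shiftFunctor T n).Additive] [Pretriangulated T]
variable (A : Type u') [Category.{v'} A] [Abelian A]

/-- A bounded t-structure on the triangulated category `T`, together with an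
identification of its heart with the abelian category `A` and the associated
cohomology functors `H i : T ⥤ A` (with their long exact sequences). -/
structure BoundedTHeart where
  /-- the underlying t-structure -/
  t : Triangulated.TStructure T
  /-- the t-structure is bounded -/
  bounded : ∀ X : T, ∃ n : ℕ, t.le (n : ℤ) X ∧ t.ge (-(n : ℤ)) X
  /-- the inclusion of the heart -/
  ι : A ⥤ T
  ι_full : ι.Full
  ι_faithful : ι.Faithful
  ι_heart : ∀ a : A, t.le 0 (ι.obj a) ∧ t.ge 0 (ι.obj a)
  ι_essSurj : ∀ X : T, t.le 0 X → t.ge 0 X → ∃ a : A, Nonempty (ι.obj a ≅ X)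
  /-- the cohomology functors of the t-structure -/
  H : ℤ → T ⥤ A
  H_additive : ∀ i : ℤ, (H i).Additive
  H_heart : ∀ a : A, Nonempty ((H 0).obj (ι.obj a) ≅ a)
  H_heart_zero : ∀ (a : A) (i : ℤ), i ≠ 0 → IsZero ((H i).obj (ι.obj a))
  H_shift : ∀ (i j : ℤ) (X : T), Nonempty ((H i).obj (X⟦j⟧) ≅ (H (i + j)).obj X)
  H_LE_iff : ∀ (n : ℤ) (X : T), t.le n X ↔ ∀ i : ℤ, n < i → IsZero ((H i).obj X)
  H_GE_iff : ∀ (n : ℤ) (X : T), t.ge n X ↔ ∀ i : ℤ, i < n → IsZero ((H i).obj X)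
  /-- connecting morphisms of the long exact cohomology sequence of a triangle -/
  δ : ∀ (Tr : Triangle T), Tr ∈ (distTriang T) → ∀ i : ℤ,
    ((H i).obj Tr.obj₃ ⟶ (H (i + 1)).obj Tr.obj₁)
  les₁ : ∀ (Tr : Triangle T) (_ : Tr ∈ (distTriang T)) (i : ℤ),
    ∃ w : (H i).map Tr.mor₁ ≫ (H i).map Tr.mor₂ = 0, (ShortComplex.mk _ _ w).Exact
  les₂ : ∀ (Tr : Triangle T) (hTr : Tr ∈ (distTriang T)) (i : ℤ),
    ∃ w : (H i).map Tr.mor₂ ≫ δ Tr hTr i = 0, (ShortComplex.mk _ _ w).Exact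
  les₃ : ∀ (Tr : Triangle T) (hTr : Tr ∈ (distTriang T)) (i : ℤ),
    ∃ w : δ Tr hTr i ≫ (H (i + 1)).map Tr.mor₁ = 0, (ShortComplex.mk _ _ w).Exact

variable {T A}

/-- The full subcategory of objects of `T` all of whose cohomologies (with respect to
the given bounded t-structure) lie in the subcategory `A'` of the heart. -/
def BoundedTHeart.cohIn (B : BoundedTHeart T A) (A' : Set A) : Set T :=
  {E : T | ∀ i : ℤ, (B.H i).obj E ∈ A'}

end THeart

variable {T : Type u} [Category.{v} T] [HasZeroObject T] [Preadditive T] [HasShift T ℤ]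
  [∀ n : ℤ, (shiftFunctor T n).Additive] [Pretriangulated T]
variable {A : Type u'} [Category.{v'} A] [Abelian A]

/-! The inclusion `⊆` holds because `{E | ∀ i, H^i(E) ∈ A'}` is thick: the long exact
cohomology sequence and the Serre property give closure under extensions, and a
retract has retracts as cohomology. For `⊇`, induct on the cohomological amplitude of
`E`: the truncation triangle `τ^{≤n} E → E → τ^{≥n+1} E` has both ends with cohomology
in `A'` (they are subobjects, resp. quotients, of that of `E`) and smaller amplitude,
while an object concentrated in a single degree `a` is `ι x⟦-a⟧` with `x ∈ A'`. -/

lemma subset_thickClosure (S : Set T) : S ⊆ thickClosure T S :=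
  fun _ hX _ _ hS => hS hX

lemma thickClosure_subset {S P : Set T} (hP : IsThickSub T P) (hSP : S ⊆ P) :
    thickClosure T S ⊆ P :=
  fun _ hX => hX P hP hSP

lemma isThickSub_thickClosure (S : Set T) : IsThickSub T (thickClosure T S) where
  zero X hX _ hP _ := hP.zero X hX
  iso e hX P hP hS := hP.iso e (hX P hP hS)
  shift X n hX P hP hS := hP.shift X n (hX P hP hS)
  ext₂ Tr hTr h₁ h₃ P hP hS := hP.ext₂ Tr hTr (h₁ P hP hS) (h₃ P hP hS)
  summand i r hir hY P hP hS := hP.summand i r hir (hY P hP hS)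

namespace IsSerreSub

variable {A' : Set A}

lemma isSerreClass (hA' : IsSerreSub A A') :
    ObjectProperty.IsSerreClass (A' : ObjectProperty A) where
  exists_zero := ⟨_, isZero_zero A, hA'.zero _ (isZero_zero A)⟩
  prop_of_mono f _ hY := hA'.subobj f inferInstance hY
  prop_of_epi f _ hX := hA'.quot f inferInstance hX
  prop_X₂_of_shortExact hS h₁ h₃ := hA'.extension _ hS h₁ h₃

lemma mem_of_iso (hA' : IsSerreSub A A') {X Y : A} (e : X ≅ Y) (hX : X ∈ A') : Y ∈ A' :=
  hA'.quot e.hom inferInstance hX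

lemma mem_X₂_of_exact (hA' : IsSerreSub A A') {S : ShortComplex A} (hS : S.Exact)
    (h₁ : S.X₁ ∈ A') (h₃ : S.X₃ ∈ A') : S.X₂ ∈ A' :=
  haveI := hA'.isSerreClass
  ObjectProperty.prop_X₂_of_exact (A' : ObjectProperty A) hS h₁ h₃

end IsSerreSub

namespace BoundedTHeart

variable (B : BoundedTHeart T A) {A' : Set A}

lemma isThickSub_cohIn (hA' : IsSerreSub A A') : IsThickSub T (B.cohIn A') where
  zero X hX i :=
    haveI := B.H_additive i
    hA'.zero _ ((B.H i).map_isZero hX)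
  iso e hX i := hA'.mem_of_iso ((B.H i).mapIso e) (hX i)
  shift X n hX i := hA'.mem_of_iso (B.H_shift i n X).some.symm (hX (i + n))
  ext₂ Tr hTr h₁ h₃ i :=
    hA'.mem_X₂_of_exact (B.les₁ Tr hTr i).choose_spec (h₁ i) (h₃ i)
  summand {X Y} f r hfr hY i := by
    have : IsSplitMono ((B.H i).map f) :=
      IsSplitMono.mk' ⟨(B.H i).map r, by
        rw [← Functor.map_comp, hfr, CategoryTheory.Functor.map_id]⟩
    exact hA'.subobj ((B.H i).map f) inferInstance (hY i)

lemma image_subset_cohIn (hA' : IsSerreSub A A') : B.ι.obj '' A' ⊆ B.cohIn A' := by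
  rintro _ ⟨x, hx, rfl⟩ i
  by_cases hi : i = 0
  · subst hi
    exact hA'.mem_of_iso (B.H_heart x).some.symm hx
  · exact hA'.zero _ (B.H_heart_zero x i hi)

section Truncation

variable {B} {Tr : Triangle T} {n : ℤ}

lemma mono_map_mor₁ (hTr : Tr ∈ distTriang T) (hY : B.t.ge (n + 1) Tr.obj₃) {i : ℤ}
    (hi : i ≤ n + 1) : Mono ((B.H i).map Tr.mor₁) := by
  obtain ⟨j, rfl⟩ : ∃ j, i = j + 1 := ⟨i - 1, by omega⟩
  obtain ⟨_, hexact⟩ := B.les₃ Tr hTr j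
  have hzero : IsZero ((B.H j).obj Tr.obj₃) := (B.H_GE_iff _ _).1 hY _ (by omega)
  exact hexact.mono_g (hzero.eq_of_src _ _)

lemma epi_map_mor₂ (hTr : Tr ∈ distTriang T) (hX : B.t.le n Tr.obj₁) {i : ℤ}
    (hi : n ≤ i) : Epi ((B.H i).map Tr.mor₂) := by
  obtain ⟨_, hexact⟩ := B.les₂ Tr hTr i
  have hzero : IsZero ((B.H (i + 1)).obj Tr.obj₁) := (B.H_LE_iff _ _).1 hX _ (by omega)
  exact hexact.epi_f (hzero.eq_of_tgt _ _)

lemma obj₁_mem_cohIn (hA' : IsSerreSub A A') (hTr : Tr ∈ distTriang T)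
    (hX : B.t.le n Tr.obj₁) (hY : B.t.ge (n + 1) Tr.obj₃) (hE : Tr.obj₂ ∈ B.cohIn A') :
    Tr.obj₁ ∈ B.cohIn A' := by
  intro i
  by_cases hi : i ≤ n
  · exact hA'.subobj _ (mono_map_mor₁ hTr hY (by omega)) (hE i)
  · exact hA'.zero _ ((B.H_LE_iff n _).1 hX i (by omega))

lemma obj₃_mem_cohIn (hA' : IsSerreSub A A') (hTr : Tr ∈ distTriang T)
    (hX : B.t.le n Tr.obj₁) (hY : B.t.ge (n + 1) Tr.obj₃) (hE : Tr.obj₂ ∈ B.cohIn A') :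
    Tr.obj₃ ∈ B.cohIn A' := by
  intro i
  by_cases hi : n + 1 ≤ i
  · exact hA'.quot _ (epi_map_mor₂ hTr hX (by omega)) (hE i)
  · exact hA'.zero _ ((B.H_GE_iff (n + 1) _).1 hY i (by omega))

lemma ge_obj₁_of_ge_obj₂ (hTr : Tr ∈ distTriang T) (hY : B.t.ge (n + 1) Tr.obj₃) {a : ℤ}
    (ha : a ≤ n + 1) (hE : B.t.ge a Tr.obj₂) : B.t.ge a Tr.obj₁ :=
  (B.H_GE_iff a _).2 fun i hi =>
    haveI := mono_map_mor₁ hTr hY (i := i) (by omega)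
    ((B.H_GE_iff a _).1 hE i hi).of_mono ((B.H i).map Tr.mor₁)

lemma le_obj₃_of_le_obj₂ (hTr : Tr ∈ distTriang T) (hX : B.t.le n Tr.obj₁) {b : ℤ}
    (hb : n ≤ b) (hE : B.t.le b Tr.obj₂) : B.t.le b Tr.obj₃ :=
  (B.H_LE_iff b _).2 fun i hi =>
    haveI := epi_map_mor₂ hTr hX (i := i) (by omega)
    ((B.H_LE_iff b _).1 hE i hi).of_epi ((B.H i).map Tr.mor₂)

end Truncation

lemma mem_thickClosure_of_le_of_ge (hA' : IsSerreSub A A') {a : ℤ} {E : T}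
    (hE : E ∈ B.cohIn A') (hle : B.t.le a E) (hge : B.t.ge a E) :
    E ∈ thickClosure T (B.ι.obj '' A') := by
  obtain ⟨x, ⟨e⟩⟩ := B.ι_essSurj (E⟦a⟧) (B.t.le_shift a a 0 (add_zero a) E hle)
    (B.t.ge_shift a a 0 (add_zero a) E hge)
  have hx : x ∈ A' := hA'.mem_of_iso ((B.H 0).mapIso e.symm ≪≫ (B.H_heart x).some)
    ((B.isThickSub_cohIn hA').shift E a hE 0)
  have hC := isThickSub_thickClosure (B.ι.obj '' A')
  exact hC.iso (shiftShiftNeg E a)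
    (hC.shift _ (-a) (hC.iso e (subset_thickClosure _ ⟨x, hx, rfl⟩)))

lemma mem_thickClosure_of_ge_of_le_add (hA' : IsSerreSub A A') (k : ℕ) :
    ∀ {a : ℤ} {E : T}, E ∈ B.cohIn A' → B.t.ge a E → B.t.le (a + k) E →
      E ∈ thickClosure T (B.ι.obj '' A') := by
  induction k with
  | zero =>
    intro a E hE hge hle
    exact B.mem_thickClosure_of_le_of_ge hA' hE (by simpa using hle) hge
  | succ k ih =>
    intro a E hE hge hle
    rw [Nat.cast_succ, ← add_assoc] at hle
    obtain ⟨X, Y, hX, hY, f, g, h, hTr⟩ := B.t.exists_triangle E (a + k) (a + k + 1) rfl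
    exact (isThickSub_thickClosure _).ext₂ _ hTr
      (ih (obj₁_mem_cohIn hA' hTr hX hY hE) (ge_obj₁_of_ge_obj₂ hTr hY (by omega) hge) hX)
      (B.mem_thickClosure_of_le_of_ge hA' (obj₃_mem_cohIn hA' hTr hX hY hE)
        (le_obj₃_of_le_obj₂ hTr hX (by omega) hle) hY)

end BoundedTHeart

/-- the thick closure in `T` of a Serre subcategory `A'` of the heart of a
bounded t-structure equals `{E | ∀ i, H^i(E) ∈ A'}`. -/
theorem stmt1 (B : BoundedTHeart T A) (A' : Set A) (hA' : IsSerreSub A A') :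
    thickClosure T (B.ι.obj '' A') = B.cohIn A' := by
  refine (thickClosure_subset (B.isThickSub_cohIn hA') (B.image_subset_cohIn hA')).antisymm
    fun E hE => ?_
  obtain ⟨n, hle, hge⟩ := B.bounded E
  refine B.mem_thickClosure_of_ge_of_le_add hA' (2 * n) hE hge ?_
  rwa [show -(n : ℤ) + ((2 * n : ℕ) : ℤ) = n by push_cast; ring]
end

section
/- Let A be an abelian category in which every object is Noetherian (every ascending chain of subobjects stabilizes). Then the Krull–Gabriel dimension of A is defined, i.e., there exists an ordinal α with A = A_{≤ α} in the Krull–Gabriel filtration. -/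
open CategoryTheory CategoryTheory.Limits CategoryTheory.Pretriangulated

universe v u v' u'

section KrullGabriel

variable (A : Type u') [Category.{v'} A] [Abelian A]

/-- `X` is simple modulo the Serre subcategory `P`, i.e. `X` becomes a simple object
in the Serre quotient `A/P`: it is nonzero in the quotient, and every subobject of `X`
becomes either zero or all of `X` in the quotient. -/
def SimpleModulo (P : Set A) (X : A) : Prop :=
  X ∉ P ∧ ∀ Y : Subobject X, ((Y : A) ∈ P ∨ Limits.cokernel Y.arrow ∈ P)

/-- The Krull-Gabriel filtration of an abelian category (indexed so that `A_{≤ -1} = 0`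
corresponds to the empty stage): at a non-limit ordinal `α`, `KGFilt A α` is the Serre
subcategory generated by the previous stages together with the objects that become
simple in the Serre quotient by the previous stage; at a limit ordinal it is the union
of the previous stages. -/
noncomputable def KGFilt (α : Ordinal.{u'}) : Set A :=
  letI := Classical.propDecidable (Order.IsSuccLimit α)
  if Order.IsSuccLimit α then
    {X | ∃ β : Ordinal.{u'}, ∃ _ : β < α, X ∈ KGFilt β}
  else
    serreClosure A
      ({X | SimpleModulo A (serreClosure A {Y | ∃ β : Ordinal.{u'}, ∃ _ : β < α, Y ∈ KGFilt β}) X}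
        ∪ {Y | ∃ β : Ordinal.{u'}, ∃ _ : β < α, Y ∈ KGFilt β})
termination_by α

/-- The Krull-Gabriel dimension of `A` is defined iff the filtration exhausts `A`. -/
def KGdimDefined : Prop := ∃ α : Ordinal.{u'}, KGFilt A α = Set.univ

/-- The Krull-Gabriel dimension: the least ordinal at which the filtration exhausts `A`. -/
noncomputable def KGdim : Ordinal.{u'} := sInf {α : Ordinal.{u'} | KGFilt A α = Set.univ}

end KrullGabriel

/-!
The filtration is a monotone family of sets of objects indexed by all ordinals, so it cannot
be injective and stabilises: `A_{≤ β+1} = A_{≤ β}` for some `β`. A fixed point `U` of the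
successor step is a Serre subcategory (it is a Serre closure) containing every object simple
modulo it. In a Noetherian category every proper Serre subcategory `P` has such an object:
for `X ∉ P`, take a subobject `Y` maximal with `X/Y ∉ P`; a subobject of `X/Y` with quotient
outside `P` pulls back to a subobject of `X` containing `Y` with quotient outside `P`, hence
equal to `Y`, so it is zero. Therefore `U = A`.
-/

theorem Monotone.exists_map_succ_eq {α : Type*} [PartialOrder α] [Small.{u} α]
    {f : Ordinal.{u} → α} (hf : Monotone f) : ∃ β, f (Order.succ β) = f β := by
  have key : ∀ a b, a < b → f a = f b → f (Order.succ a) = f a := fun a b hab he =>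
    le_antisymm (he ▸ hf (Order.succ_le_of_lt hab)) (hf (Order.le_succ a))
  obtain ⟨a, b, he, hne⟩ := Function.not_injective_iff.1 (not_injective_of_ordinal f)
  rcases hne.lt_or_gt with hab | hba
  · exact ⟨a, key a b hab he⟩
  · exact ⟨b, key b a hba he.symm⟩

section Serre

variable {A : Type u'} [Category.{v'} A] [Abelian A]

lemma subset_serreClosure (S : Set A) : S ⊆ serreClosure A S :=
  fun _ hX _ _ hSP => hSP hX

lemma isSerreSub_serreClosure (S : Set A) : IsSerreSub A (serreClosure A S) where
  zero X hX _ hP _ := hP.zero X hX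
  subobj f hf hY P hP hSP := hP.subobj f hf (hY P hP hSP)
  quot f hf hX P hP hSP := hP.quot f hf (hX P hP hSP)
  extension S' hS' h₁ h₃ P hP hSP := hP.extension S' hS' (h₁ P hP hSP) (h₃ P hP hSP)

lemma IsSerreSub.serreClosure_eq {P : Set A} (hP : IsSerreSub A P) : serreClosure A P = P :=
  Set.Subset.antisymm (fun _ hX => hX P hP subset_rfl) (subset_serreClosure P)

end Serre

namespace CategoryTheory.Subobject

variable {A : Type u'} [Category.{v'} A] [Abelian A] {X Q : A} (π : X ⟶ Q) (Z : Subobject Q)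

lemma le_pullback_obj_of_arrow_comp_eq_zero {Y : Subobject X} (hY : Y.arrow ≫ π = 0) :
    Y ≤ (pullback π).obj Z :=
  le_of_comm ((isPullback π Z).lift 0 Y.arrow (by simp [hY])) (IsPullback.lift_snd _ _ _ _)

lemma pullback_obj_arrow_comp_cokernel_π :
    ((pullback π).obj Z).arrow ≫ π ≫ cokernel.π Z.arrow = 0 := by
  rw [← Category.assoc, ← (isPullback π Z).w, Category.assoc, cokernel.condition, comp_zero]

lemma epi_cokernel_desc_pullback_obj [Epi π] :
    Epi (cokernel.desc _ (π ≫ cokernel.π Z.arrow) (pullback_obj_arrow_comp_cokernel_π π Z)) :=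
  epi_of_epi_fac (cokernel.π_desc _ _ (pullback_obj_arrow_comp_cokernel_π π Z))

lemma isZero_of_pullback_obj_arrow_comp_eq_zero [Epi π]
    (h : ((pullback π).obj Z).arrow ≫ π = 0) : IsZero (Z : A) := by
  have hπ : pullbackπ π Z = 0 := by
    rw [← cancel_mono Z.arrow, (isPullback π Z).w, h, zero_comp]
  have : Epi (pullbackπ π Z) := Abelian.epi_fst_of_isLimit _ _ (isPullback π Z).isLimit
  rw [hπ] at this
  exact IsZero.of_epi_zero ((pullback π).obj Z : A) Z

end CategoryTheory.Subobject

section Noetherian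

variable {A : Type u'} [Category.{v'} A] [Abelian A]

lemma simpleModulo_cokernel_of_maximal {P : Set A} (hP : IsSerreSub A P) {X : A}
    (Y : Subobject X) (hY : cokernel Y.arrow ∉ P)
    (hmax : ∀ W : Subobject X, Y < W → cokernel W.arrow ∈ P) :
    SimpleModulo A P (cokernel Y.arrow) := by
  refine ⟨hY, fun Z => or_iff_not_imp_right.2 fun hZ => hP.zero _ ?_⟩
  set W := (Subobject.pullback (cokernel.π Y.arrow)).obj Z
  have hYW : Y ≤ W := Subobject.le_pullback_obj_of_arrow_comp_eq_zero _ _ (cokernel.condition _)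
  have hWY : W ≤ Y := by
    by_contra hWY
    exact hZ (hP.quot _ (Subobject.epi_cokernel_desc_pullback_obj _ _)
      (hmax W (hYW.lt_of_not_ge hWY)))
  refine Subobject.isZero_of_pullback_obj_arrow_comp_eq_zero (cokernel.π Y.arrow) Z ?_
  rw [← Subobject.ofLE_arrow hWY, Category.assoc, cokernel.condition, comp_zero]

lemma exists_simpleModulo (hN : ∀ X : A, WellFoundedGT (Subobject X))
    {P : Set A} (hP : IsSerreSub A P) (hne : P ≠ Set.univ) :
    ∃ X : A, SimpleModulo A P X := by
  obtain ⟨X, hX⟩ := (Set.ne_univ_iff_exists_notMem P).1 hne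
  have hbot : cokernel (⊥ : Subobject X).arrow ∉ P := fun h => hX <|
    hP.subobj (cokernelIsoOfEq Subobject.bot_arrow ≪≫ cokernelZeroIsoTarget).inv inferInstance h
  obtain ⟨Y, hY, hmax⟩ := (hN X).wf.has_min {Y | cokernel Y.arrow ∉ P} ⟨⊥, hbot⟩
  exact ⟨_, simpleModulo_cokernel_of_maximal hP Y hY fun W hW => not_not.1 (hmax W · hW)⟩

end Noetherian

section KGFiltration

variable {A : Type u'} [Category.{v'} A] [Abelian A]

def KGStep (U : Set A) : Set A :=
  serreClosure A ({X | SimpleModulo A (serreClosure A U) X} ∪ U)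

lemma eq_univ_of_KGStep_eq (hN : ∀ X : A, WellFoundedGT (Subobject X)) {U : Set A}
    (hU : KGStep U = U) : U = Set.univ := by
  have hSerre : IsSerreSub A U := hU ▸ isSerreSub_serreClosure _
  by_contra hne
  obtain ⟨X, hX⟩ := exists_simpleModulo hN hSerre hne
  refine hX.1 (hU.subset (subset_serreClosure _ (Or.inl ?_)))
  rwa [Set.mem_ofPred_eq, hSerre.serreClosure_eq]

lemma KGFilt_of_isSuccLimit {α : Ordinal.{u'}} (hα : Order.IsSuccLimit α) :
    KGFilt A α = {X | ∃ β : Ordinal.{u'}, ∃ _ : β < α, X ∈ KGFilt A β} := by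
  rw [KGFilt, if_pos hα]

lemma KGFilt_of_not_isSuccLimit {α : Ordinal.{u'}} (hα : ¬ Order.IsSuccLimit α) :
    KGFilt A α = KGStep {Y | ∃ β : Ordinal.{u'}, ∃ _ : β < α, Y ∈ KGFilt A β} := by
  rw [KGFilt, if_neg hα, KGStep]

lemma KGFilt_subset_of_lt {β α : Ordinal.{u'}} (h : β < α) : KGFilt A β ⊆ KGFilt A α := by
  by_cases hα : Order.IsSuccLimit α
  · rw [KGFilt_of_isSuccLimit hα]
    exact fun X hX => ⟨β, h, hX⟩
  · rw [KGFilt_of_not_isSuccLimit hα]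
    exact fun X hX => subset_serreClosure _ (Or.inr ⟨β, h, hX⟩)

lemma monotone_KGFilt : Monotone (KGFilt A) := fun _ _ h =>
  h.lt_or_eq.elim KGFilt_subset_of_lt fun h => h ▸ subset_rfl

lemma KGFilt_succ (β : Ordinal.{u'}) : KGFilt A (Order.succ β) = KGStep (KGFilt A β) := by
  rw [KGFilt_of_not_isSuccLimit (Order.not_isSuccLimit_succ β)]
  congr 1
  ext X
  simp only [Order.lt_succ_iff, exists_prop]
  exact ⟨fun ⟨γ, hγ, hX⟩ => monotone_KGFilt hγ hX, fun hX => ⟨β, le_rfl, hX⟩⟩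

end KGFiltration

variable {A : Type u'} [Category.{v'} A] [Abelian A]

/-- if every object of the abelian category `A` is Noetherian (ascending
chain condition on subobjects), then the Krull-Gabriel dimension of `A` is defined. -/
theorem stmt7 (h : ∀ X : A, WellFoundedGT (Subobject X)) :
    ∃ α : Ordinal.{u'}, KGFilt A α = Set.univ := by
  obtain ⟨β, hβ⟩ := (monotone_KGFilt (A := A)).exists_map_succ_eq
  exact ⟨β, eq_univ_of_KGStep_eq h (by rw [← KGFilt_succ, hβ])⟩
end

section
/- Let A be an abelian category in which every object is Artinian (every descending chain of subobjects stabilizes). Then the Krull–Gabriel dimension of A is defined. -/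
open CategoryTheory CategoryTheory.Limits CategoryTheory.Pretriangulated

universe v u v' u'

variable {A : Type u'} [Category.{v'} A] [Abelian A]

/-!
Since `A` is small, the stages of the filtration are bounded: every object that ever enters it
lies in some stage below `γ + 1`. The Serre closure `Q` of these stages then contains every
object simple modulo `Q`, as such objects enter at stage `γ + 1`. In an Artinian category a
Serre subcategory with this property is everything, because a minimal subobject of an object
outside it would be simple modulo it.
-/

section Serre

lemma IsSerreSub.mem_of_iso_s8 {P : Set A} (hP : IsSerreSub A P) {X Y : A} (e : X ≅ Y)
    (hX : X ∈ P) : Y ∈ P :=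
  hP.quot e.hom inferInstance hX

/-- A minimal subobject of `X` outside `P` is simple modulo `P`. -/
lemma IsSerreSub.exists_simpleModulo_subobject {P : Set A} (hP : IsSerreSub A P) {X : A}
    [WellFoundedLT (Subobject X)] (hX : X ∉ P) : ∃ Y : Subobject X, SimpleModulo A P Y := by
  have htop : ((⊤ : Subobject X) : A) ∉ P := fun h =>
    hX (hP.mem_of_iso_s8 (asIso (⊤ : Subobject X).arrow) h)
  obtain ⟨Y, hY, hYmin⟩ :=
    wellFounded_lt.has_min {Y : Subobject X | (Y : A) ∉ P} ⟨⊤, htop⟩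
  refine ⟨Y, hY, fun Z => or_iff_not_imp_left.2 fun hZ => ?_⟩
  have hZY : ((Subobject.subobjectOrderIso Y Z : Subobject X) : A) ∉ P := fun h =>
    hZ (hP.mem_of_iso_s8 (Subobject.underlyingIso _) h)
  have hZtop : Z = ⊤ := by
    apply (Subobject.subobjectOrderIso Y).injective
    rw [map_top]
    exact Subtype.ext
      ((Subobject.subobjectOrderIso Y Z).2.lt_or_eq.resolve_left (hYmin _ hZY))
  have : IsIso Z.arrow := (Subobject.isIso_arrow_iff_eq_top Z).2 hZtop
  exact hP.zero _ (isZero_cokernel_of_epi Z.arrow)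

lemma IsSerreSub.eq_univ_of_simpleModulo_mem (hA : ∀ X : A, WellFoundedLT (Subobject X))
    {P : Set A} (hP : IsSerreSub A P) (hsimple : ∀ X, SimpleModulo A P X → X ∈ P) :
    P = Set.univ := by
  refine Set.eq_univ_of_forall fun X => by_contra fun hX => ?_
  obtain ⟨Y, hY⟩ := hP.exists_simpleModulo_subobject hX
  exact hY.1 (hsimple _ hY)

end Serre

section Filtration

variable (A) in
def KGFiltBelow (α : Ordinal.{u'}) : Set A :=
  {Y | ∃ β : Ordinal.{u'}, ∃ _ : β < α, Y ∈ KGFilt A β}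

lemma KGFilt_of_not_isSuccLimit_s8 {α : Ordinal.{u'}} (hα : ¬Order.IsSuccLimit α) :
    KGFilt A α = serreClosure A
      ({X | SimpleModulo A (serreClosure A (KGFiltBelow A α)) X} ∪ KGFiltBelow A α) := by
  rw [KGFilt, if_neg hα]
  rfl

lemma simpleModulo_mem_KGFilt {α : Ordinal.{u'}} (hα : ¬Order.IsSuccLimit α) {X : A}
    (hX : SimpleModulo A (serreClosure A (KGFiltBelow A α)) X) : X ∈ KGFilt A α := by
  rw [KGFilt_of_not_isSuccLimit_s8 hα]
  exact subset_serreClosure _ (Or.inl hX)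

lemma serreClosure_KGFiltBelow_subset {α : Ordinal.{u'}} (hα : ¬Order.IsSuccLimit α) :
    serreClosure A (KGFiltBelow A α) ⊆ KGFilt A α := by
  rw [KGFilt_of_not_isSuccLimit_s8 hα]
  exact fun X hX P hP hS => hX P hP (Set.subset_union_right.trans hS)

variable (A) in
lemma exists_KGFilt_subset_KGFiltBelow :
    ∃ γ : Ordinal.{u'}, ∀ α, KGFilt A α ⊆ KGFiltBelow A (Order.succ γ) := by
  let entry : A → Ordinal.{u'} := fun X => sInf {α | X ∈ KGFilt A α}
  refine ⟨⨆ X, entry X, fun α X hX => ⟨entry X, ?_, ?_⟩⟩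
  · exact Order.lt_succ_of_le (Ordinal.le_iSup entry X)
  · exact csInf_mem (s := {α | X ∈ KGFilt A α}) ⟨α, hX⟩

end Filtration

/-- if every object of the abelian category `A` is Artinian (descending
chain condition on subobjects), then the Krull-Gabriel dimension of `A` is defined. -/
theorem stmt8 (h : ∀ X : A, WellFoundedLT (Subobject X)) :
    ∃ α : Ordinal.{u'}, KGFilt A α = Set.univ := by
  obtain ⟨γ, hγ⟩ := exists_KGFilt_subset_KGFiltBelow A
  have hsucc : ¬Order.IsSuccLimit (Order.succ γ) := Order.not_isSuccLimit_succ γ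
  have hQ : serreClosure A (KGFiltBelow A (Order.succ γ)) = Set.univ := by
    refine (isSerreSub_serreClosure _).eq_univ_of_simpleModulo_mem h fun X hX => ?_
    exact subset_serreClosure _ (hγ _ (simpleModulo_mem_KGFilt hsucc hX))
  exact ⟨Order.succ γ,
    Set.eq_univ_of_univ_subset (hQ ▸ serreClosure_KGFiltBelow_subset hsucc)⟩
end

section
/- Let A be an abelian category and B ⊆ A a Serre subcategory. Then the sequence K_0(B) → K_0(A) → K_0(A/B) → 0 is exact, where A/B is the Serre quotient category. -/
open CategoryTheory CategoryTheory.Limits CategoryTheory.Pretriangulated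

universe v u v' u'

section SerreQuotient

variable (A : Type u') [Category.{v'} A] [Abelian A]

/-- The class of morphisms whose kernel and cokernel both lie in `P`; the Serre
quotient `A/P` is the localization of `A` at this class of morphisms. -/
def serreW (P : Set A) : MorphismProperty A :=
  fun _ _ f => Limits.kernel f ∈ P ∧ Limits.cokernel f ∈ P

end SerreQuotient

section K0Ab

variable (A : Type u') [Category.{v'} A] [Abelian A]

/-- Relations for the Grothendieck group of an abelian category. -/
def K0AbRel : AddSubgroup (FreeAbelianGroup A) :=
  AddSubgroup.closure {x | ∃ S : ShortComplex A, S.ShortExact ∧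
    x = FreeAbelianGroup.of S.X₂ - FreeAbelianGroup.of S.X₁ - FreeAbelianGroup.of S.X₃}

/-- The Grothendieck group `K₀` of an abelian category: the free abelian group on
objects modulo the relations `[X₂] = [X₁] + [X₃]` for short exact sequences
`0 → X₁ → X₂ → X₃ → 0`. -/
def K0Ab := FreeAbelianGroup A ⧸ K0AbRel A

noncomputable instance : AddCommGroup (K0Ab A) :=
  QuotientAddGroup.Quotient.addCommGroup (K0AbRel A)

/-- The class of an object in `K₀` of an abelian category. -/
def K0AbCls (X : A) : K0Ab A := QuotientAddGroup.mk (FreeAbelianGroup.of X)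

end K0Ab

section K0Serre

variable (A : Type u') [Category.{v'} A] [Abelian A]

/-- Relations for the Grothendieck group of a Serre subcategory `P ⊆ A`: short exact
sequences of `A` all of whose terms lie in `P` (these are exactly the short exact
sequences of the abelian category `P`). -/
def K0SerreRel (P : Set A) : AddSubgroup (FreeAbelianGroup P) :=
  AddSubgroup.closure {x | ∃ S : ShortComplex A, S.ShortExact ∧
    ∃ (h₁ : S.X₁ ∈ P) (h₂ : S.X₂ ∈ P) (h₃ : S.X₃ ∈ P),
      x = FreeAbelianGroup.of ⟨S.X₂, h₂⟩ - FreeAbelianGroup.of ⟨S.X₁, h₁⟩ -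
        FreeAbelianGroup.of ⟨S.X₃, h₃⟩}

/-- The Grothendieck group `K₀` of a Serre subcategory. -/
def K0Serre (P : Set A) := FreeAbelianGroup P ⧸ K0SerreRel A P

noncomputable instance (P : Set A) : AddCommGroup (K0Serre A P) :=
  QuotientAddGroup.Quotient.addCommGroup (K0SerreRel A P)

/-- The class of an object of `P` in `K₀(P)`. -/
def K0SerreCls (P : Set A) (X : P) : K0Serre A P :=
  QuotientAddGroup.mk (FreeAbelianGroup.of X)

end K0Serre

/-!
Since `Q` is essentially surjective, `g` is onto, and `g ∘ f = 0` because `Q` kills the objects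
of `P`. Conversely, let `π` be a homomorphism out of `K₀(A)` vanishing on the classes of `P`.
A morphism `u : X ⟶ Y` inverted by `Q` has kernel and cokernel in `P`, and
`[X] + [coker u] = [Y] + [ker u]`, so by the calculus of fractions `π [X] = π [Y]` whenever
`Q X ≅ Q Y`. Every short exact sequence of `A/P` is, up to isomorphism, the image of one of `A`
(lift its epimorphism and take the kernel), so `π` descends to `K₀(A/P)`. Taking for `π` the
projection onto `K₀(A) / im f` gives `ker g ⊆ im f`.
-/

open ZeroObject

lemma IsSerreSub.isSerreClass_s10 {A : Type*} [Category A] [Abelian A] {P : Set A}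
    (hP : IsSerreSub A P) : ObjectProperty.IsSerreClass (P : ObjectProperty A) where
  exists_zero := ⟨0, isZero_zero A, hP.zero _ (isZero_zero A)⟩
  prop_of_mono f _ hY := hP.subobj f inferInstance hY
  prop_of_epi f _ hX := hP.quot f inferInstance hX
  prop_X₂_of_shortExact hS h₁ h₃ := hP.extension _ hS h₁ h₃

section K0Ab

variable {A : Type*} [Category A] [Abelian A] {G : Type*} [AddCommGroup G]

lemma K0AbCls_eq_add_of_shortExact {S : ShortComplex A} (hS : S.ShortExact) :
    K0AbCls A S.X₂ = K0AbCls A S.X₁ + K0AbCls A S.X₃ :=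
  QuotientAddGroup.eq_iff_sub_mem.2
    (AddSubgroup.subset_closure ⟨S, hS, (sub_sub _ _ _).symm⟩)

lemma K0AbCls_eq_zero_of_isZero {X : A} (hX : IsZero X) : K0AbCls A X = 0 := by
  have hS : (ShortComplex.mk (𝟙 X) (𝟙 X) (hX.eq_of_src _ _)).ShortExact :=
    .mk' (ShortComplex.exact_of_isZero_X₂ _ hX) inferInstance inferInstance
  simpa using (K0AbCls_eq_add_of_shortExact hS).symm

lemma K0AbCls_eq_of_iso {X Y : A} (e : X ≅ Y) : K0AbCls A X = K0AbCls A Y := by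
  have hS : (ShortComplex.mk (0 : 0 ⟶ X) e.hom zero_comp).ShortExact :=
    .mk' ((ShortComplex.exact_iff_mono _ rfl).2 inferInstance) inferInstance inferInstance
  simpa [K0AbCls_eq_zero_of_isZero (isZero_zero A)] using K0AbCls_eq_add_of_shortExact hS

lemma K0AbCls_add_cokernel {X Y : A} (u : X ⟶ Y) :
    K0AbCls A X + K0AbCls A (cokernel u) = K0AbCls A Y + K0AbCls A (kernel u) := by
  have hX : K0AbCls A X = K0AbCls A (kernel u) + K0AbCls A (Abelian.coimage u) :=
    K0AbCls_eq_add_of_shortExact (S := .mk _ _ (cokernel.condition (kernel.ι u)))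
      (.mk' (ShortComplex.exact_of_g_is_cokernel _ (cokernelIsCokernel _)) inferInstance
        inferInstance)
  have hY : K0AbCls A Y = K0AbCls A (Abelian.image u) + K0AbCls A (cokernel u) :=
    K0AbCls_eq_add_of_shortExact (S := .mk _ _ (kernel.condition (cokernel.π u)))
      (.mk' (ShortComplex.exact_of_f_is_kernel _ (kernelIsKernel _)) inferInstance
        inferInstance)
  rw [hX, hY, K0AbCls_eq_of_iso (Abelian.coimageIsoImage u)]
  abel

@[ext]
lemma K0Ab.hom_ext {u v : K0Ab A →+ G} (h : ∀ X, u (K0AbCls A X) = v (K0AbCls A X)) :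
    u = v :=
  QuotientAddGroup.addMonoidHom_ext _ (FreeAbelianGroup.lift_ext _ _ h)

lemma K0Ab.eq_top_of_cls_mem {H : AddSubgroup (K0Ab A)} (h : ∀ X, K0AbCls A X ∈ H) :
    H = ⊤ := by
  have : QuotientAddGroup.mk' H = 0 :=
    K0Ab.hom_ext fun X => (QuotientAddGroup.eq_zero_iff _).2 (h X)
  rw [← QuotientAddGroup.ker_mk' H, this, AddMonoidHom.ker_zero]

noncomputable def K0Ab.lift (φ : A → G)
    (hφ : ∀ S : ShortComplex A, S.ShortExact → φ S.X₂ = φ S.X₁ + φ S.X₃) :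
    K0Ab A →+ G :=
  QuotientAddGroup.lift (K0AbRel A) (FreeAbelianGroup.lift φ) <| by
    rw [K0AbRel, AddSubgroup.closure_le]
    rintro _ ⟨S, hS, rfl⟩
    simp [hφ S hS]

@[simp]
lemma K0Ab.lift_cls (φ : A → G)
    (hφ : ∀ S : ShortComplex A, S.ShortExact → φ S.X₂ = φ S.X₁ + φ S.X₃) (X : A) :
    K0Ab.lift φ hφ (K0AbCls A X) = φ X :=
  FreeAbelianGroup.lift_apply_of φ X

lemma K0Serre.hom_ext {P : Set A} {u v : K0Serre A P →+ G}
    (h : ∀ X, u (K0SerreCls A P X) = v (K0SerreCls A P X)) : u = v :=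
  QuotientAddGroup.addMonoidHom_ext _ (FreeAbelianGroup.lift_ext _ _ h)

end K0Ab

namespace CategoryTheory.ObjectProperty

variable {A : Type*} [Category A] [Abelian A] (P : ObjectProperty A) [P.IsSerreClass]
  {G : Type*} [AddCommGroup G] {π : K0Ab A →+ G}

lemma map_K0AbCls_eq_of_isoModSerre (hπ : ∀ X, P X → π (K0AbCls A X) = 0) {X Y : A}
    {u : X ⟶ Y} (hu : P.isoModSerre u) : π (K0AbCls A X) = π (K0AbCls A Y) := by
  have := congrArg π (K0AbCls_add_cokernel u)
  rwa [map_add, map_add, hπ _ hu.2, hπ _ hu.1, add_zero, add_zero] at this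

variable {D : Type*} [Category D] [Abelian D]

lemma map_K0AbCls_eq_of_iso_obj (L : A ⥤ D) [L.IsLocalization P.isoModSerre] [L.Additive]
    (hπ : ∀ X, P X → π (K0AbCls A X) = 0) {X Y : A} (e : L.obj X ≅ L.obj Y) :
    π (K0AbCls A X) = π (K0AbCls A Y) := by
  obtain ⟨φ, hφ⟩ := Localization.exists_leftFraction L P.isoModSerre e.hom
  have : IsIso (L.map φ.f) := by
    rw [← φ.map_comp_map_s L (Localization.inverts L _), ← hφ]
    have := Localization.inverts L _ _ φ.hs
    infer_instance
  rw [map_K0AbCls_eq_of_isoModSerre P hπ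
      ((SerreClassLocalization.isIso_map_iff L P φ.f).1 this),
    map_K0AbCls_eq_of_isoModSerre P hπ φ.hs]

lemma exists_shortExact_obj_iso (L : A ⥤ D) [L.IsLocalization P.isoModSerre] [L.Additive]
    {S : ShortComplex D} (hS : S.ShortExact) :
    ∃ T : ShortComplex A, T.ShortExact ∧ Nonempty (L.obj T.X₁ ≅ S.X₁) ∧
      Nonempty (L.obj T.X₂ ≅ S.X₂) ∧ Nonempty (L.obj T.X₃ ≅ S.X₃) := by
  obtain ⟨X, Y, p, _, ⟨e⟩⟩ := (SerreClassLocalization.epi_iff L P S.g).1 hS.epi_g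
  have := SerreClassLocalization.preservesKernel L P p
  refine ⟨.mk _ _ (kernel.condition p),
    .mk' (ShortComplex.exact_of_f_is_kernel _ (kernelIsKernel p)) inferInstance inferInstance,
    ⟨?_⟩, ⟨Arrow.leftFunc.mapIso e⟩, ⟨Arrow.rightFunc.mapIso e⟩⟩
  exact PreservesKernel.iso L p ≪≫
    kernel.mapIso _ _ (Arrow.leftFunc.mapIso e) (Arrow.rightFunc.mapIso e) e.hom.w.symm ≪≫
    IsLimit.conePointUniqueUpToIso (kernelIsKernel S.g) hS.fIsKernel

lemma exists_K0Ab_desc (L : A ⥤ D) [L.IsLocalization P.isoModSerre] [L.Additive]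
    (hπ : ∀ X, P X → π (K0AbCls A X) = 0) :
    ∃ ψ : K0Ab D →+ G, ∀ X, ψ (K0AbCls D (L.obj X)) = π (K0AbCls A X) := by
  have := Localization.essSurj L P.isoModSerre
  have preimage_eq {Y : D} {X : A} (e : L.obj X ≅ Y) :
      π (K0AbCls A (L.objPreimage Y)) = π (K0AbCls A X) :=
    map_K0AbCls_eq_of_iso_obj P L hπ (L.objObjPreimageIso Y ≪≫ e.symm)
  refine ⟨K0Ab.lift (fun Y => π (K0AbCls A (L.objPreimage Y))) fun S hS => ?_,
    fun X => by rw [K0Ab.lift_cls, preimage_eq (Iso.refl _)]⟩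
  obtain ⟨T, hT, ⟨e₁⟩, ⟨e₂⟩, ⟨e₃⟩⟩ := exists_shortExact_obj_iso P L hS
  rw [preimage_eq e₁, preimage_eq e₂, preimage_eq e₃, K0AbCls_eq_add_of_shortExact hT,
    map_add]

end CategoryTheory.ObjectProperty

variable {A : Type u'} [Category.{v'} A] [Abelian A]
variable {C : Type u} [Category.{v} C] [Abelian C]

theorem stmt10_general (P : Set A) (hP : IsSerreSub A P)
    (Q : A ⥤ C) [Q.Additive] [Q.IsLocalization (serreW A P)]
    (f : K0Serre A P →+ K0Ab A) (hf : ∀ X : P, f (K0SerreCls A P X) = K0AbCls A X.1)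
    (g : K0Ab A →+ K0Ab C) (hg : ∀ X : A, g (K0AbCls A X) = K0AbCls C (Q.obj X)) :
    Function.Surjective g ∧ g.ker = f.range := by
  have := hP.isSerreClass_s10
  -- `serreW A P` is `ObjectProperty.isoModSerre P` unfolded
  have : Q.IsLocalization (ObjectProperty.isoModSerre P) := ‹Q.IsLocalization (serreW A P)›
  have := Localization.essSurj Q (ObjectProperty.isoModSerre P)
  refine ⟨g.range_eq_top.1 <| K0Ab.eq_top_of_cls_mem fun Y =>
    ⟨K0AbCls A (Q.objPreimage Y), ?_⟩, le_antisymm ?_ ?_⟩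
  · rw [hg]
    exact K0AbCls_eq_of_iso (Q.objObjPreimageIso Y)
  · intro x hx
    obtain ⟨ψ, hψ⟩ := ObjectProperty.exists_K0Ab_desc P Q (π := QuotientAddGroup.mk' f.range)
      fun X hX => (QuotientAddGroup.eq_zero_iff _).2 ⟨_, hf ⟨X, hX⟩⟩
    have hψg : ψ.comp g = QuotientAddGroup.mk' f.range := K0Ab.hom_ext fun X => by
      rw [AddMonoidHom.comp_apply, hg, hψ]
    rw [← QuotientAddGroup.eq_zero_iff, ← QuotientAddGroup.mk'_apply, ← hψg,
      AddMonoidHom.comp_apply, hx, map_zero]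
  · have hgf : g.comp f = 0 := K0Serre.hom_ext fun X => by
      rw [AddMonoidHom.comp_apply, hf, hg, AddMonoidHom.zero_apply, K0AbCls_eq_zero_of_isZero
        ((ObjectProperty.SerreClassLocalization.isZero_obj_iff Q P _).2 X.2)]
    rintro _ ⟨y, rfl⟩
    exact DFunLike.congr_fun hgf y

/-- for a Serre subcategory `P ⊆ A` with Serre quotient `Q : A ⥤ C = A/P`
(an exact localization of `A` at the morphisms with kernel and cokernel in `P`), the
sequence `K₀(P) → K₀(A) → K₀(A/P) → 0` is exact. -/
theorem stmt10 (P : Set A) (hP : IsSerreSub A P)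
    (Q : A ⥤ C) [Q.Additive] [PreservesFiniteLimits Q] [PreservesFiniteColimits Q]
    [Q.IsLocalization (serreW A P)]
    (f : K0Serre A P →+ K0Ab A) (hf : ∀ X : P, f (K0SerreCls A P X) = K0AbCls A X.1)
    (g : K0Ab A →+ K0Ab C) (hg : ∀ X : A, g (K0AbCls A X) = K0AbCls C (Q.obj X)) :
    Function.Surjective g ∧ g.ker = f.range :=
  stmt10_general P hP Q f hf g hg
end
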